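/- In the setting where σ > 0 and R > 0 are chosen so that A + L < a and B₀φ(σ) + (B₁/a + B₂Γ/a²)r₁ + (B₂/a)r₂ < R/2 (with r₁ = sup|w|, r₂ = sup|q| over (0,σ) × D_R), consider the characteristic ODE t dx/dt = −b(t,x), x(t₀) = ξ with b ∈ 𝒳₀((0,σ) × D_R), t₀ ∈ (0,σ), and let (t_ξ, t₀] be the maximal interval of existence of the solution x(t) with values in D_R. If ξ ∈ D_{R/2}, then t_ξ = 0; that is, the characteristic curve extends backward to t = 0. -/

import Mathlib

/-!
Suppose `t_ξ > 0`. Along the characteristic the speed is `|b|/t ≤ (B₀ μ + B₁ |w| + B₂ |q|)/t`;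
feeding in the decay of `w` and `q` from a time `t > t_ξ` and integrating from `t` to `t₀` gives
`|x(t) - ξ| ≤ B₀ φ(σ) + (B₁/a + B₂Γ/a²) r₁ + (B₂/a) r₂ < R/2`, because
`∫ₜ^{t₀} tᵃ s^{-a-1} ds ≤ 1/a` and `∫ₜ^{t₀} tᵃ s^{-a-1} log(s/t) ds ≤ 1/a²`. So the curve stays in
a disc `D_ρ` with `ρ < R`. Near `[t_ξ/2, t₀] × D_ρ` the field `-b/t` is bounded and, by the Cauchy
estimates, uniformly Lipschitz in `x`; Picard–Lindelöf and uniqueness then continue the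
solution below `t_ξ`, contradicting maximality.
-/

open Set MeasureTheory Complex

noncomputable section

/-- The open disc of radius `r` centred at `0` in `ℂ`. -/
def Disc (r : ℝ) : Set ℂ := {z : ℂ | ‖z‖ < r}

/-- `μ` is a weight function on `(0, T₀]`: positive, continuous, increasing,
with `∫₀^{T₀} μ(s)/s ds < ∞`. -/
def IsWeight (T₀ : ℝ) (μ : ℝ → ℝ) : Prop :=
  (∀ t ∈ Set.Ioc (0:ℝ) T₀, 0 < μ t) ∧
    ContinuousOn μ (Set.Ioc 0 T₀) ∧
    MonotoneOn μ (Set.Ioc 0 T₀) ∧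
    MeasureTheory.IntegrableOn (fun s => μ s / s) (Set.Ioc 0 T₀)

/-- `φ(t) = ∫₀ᵗ μ(s)/s ds`. -/
def phi (μ : ℝ → ℝ) (t : ℝ) : ℝ := ∫ s in Set.Ioc (0:ℝ) t, μ s / s

open Metric
open scoped NNReal Topology

theorem disc_eq_ball (r : ℝ) : Disc r = ball 0 r := by
  ext z; simp [Disc]

theorem norm_neg_div_ofReal {β : ℂ} {s : ℝ} (hs : 0 < s) : ‖-β / (s : ℂ)‖ = ‖β‖ / s := by
  rw [norm_div, norm_neg, Complex.norm_real, Real.norm_of_nonneg hs.le]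

theorem integral_rpow_decay_le {a t t₀ : ℝ} (ha : 0 < a) (ht : 0 < t) (htt₀ : t ≤ t₀) :
    ∫ s in t..t₀, t ^ a * s ^ (-a - 1) ≤ 1 / a := by
  have hzero : (0 : ℝ) ∉ uIcc t t₀ := by
    rw [uIcc_of_le htt₀]; exact fun h => (ht.trans_le h.1).false
  have hta := Real.rpow_pos_of_pos ht a
  have ht₀a := Real.rpow_pos_of_pos (ht.trans_le htt₀) a
  rw [intervalIntegral.integral_const_mul, integral_rpow (Or.inr ⟨by linarith, hzero⟩),
    show -a - 1 + 1 = -a by ring, Real.rpow_neg ht.le, Real.rpow_neg (ht.trans_le htt₀).le,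
    show t ^ a * (((t₀ ^ a)⁻¹ - (t ^ a)⁻¹) / -a) = (1 - t ^ a / t₀ ^ a) / a by field_simp; ring]
  gcongr
  linarith [div_pos hta ht₀a]

theorem integral_rpow_decay_mul_log_le {a t t₀ : ℝ} (ha : 0 < a) (ht : 0 < t) (htt₀ : t ≤ t₀) :
    ∫ s in t..t₀, t ^ a * s ^ (-a - 1) * Real.log (s / t) ≤ 1 / a ^ 2 := by
  set F : ℝ → ℝ := fun s => -(t ^ a * s ^ (-a) * (Real.log (s / t) / a + 1 / a ^ 2))
  have hF : ∀ s ∈ uIcc t t₀, HasDerivAt F (t ^ a * s ^ (-a - 1) * Real.log (s / t)) s := by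
    intro s hs
    have hs0 : 0 < s := ht.trans_le (uIcc_of_le htt₀ ▸ hs).1
    have hlog := ((hasDerivAt_id s).div_const t).log (div_pos hs0 ht).ne'
    refine HasDerivAt.congr_deriv (f := F) (((Real.hasDerivAt_rpow_const (p := -a)
      (Or.inl hs0.ne')).const_mul (t ^ a)).mul ((hlog.div_const a).add_const (1 / a ^ 2))).neg ?_
    rw [Real.rpow_sub_one hs0.ne']
    simp only [id]
    field_simp
    ring
  have hcont : ContinuousOn (fun s => t ^ a * s ^ (-a - 1) * Real.log (s / t)) (Icc t t₀) := by
    fun_prop (disch := intro s hs; have := ht.trans_le hs.1; positivity)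
  rw [intervalIntegral.integral_eq_sub_of_hasDerivAt hF (hcont.intervalIntegrable_of_Icc htt₀)]
  simp only [F, div_self ht.ne', Real.log_one, zero_div, zero_add]
  rw [Real.rpow_neg ht.le, mul_inv_cancel₀ (Real.rpow_pos_of_pos ht a).ne']
  have : 0 ≤ t ^ a * t₀ ^ (-a) * (Real.log (t₀ / t) / a + 1 / a ^ 2) :=
    mul_nonneg (mul_nonneg (Real.rpow_nonneg ht.le a) (Real.rpow_nonneg (ht.le.trans htt₀) (-a)))
      (add_nonneg (div_nonneg (Real.log_nonneg ((one_le_div ht).mpr htt₀)) ha.le) (by positivity))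
  linarith

theorem intervalIntegral_le_phi {μ : ℝ → ℝ} {σ t t₀ : ℝ} (hμ : ∀ s ∈ Ioc 0 σ, 0 ≤ μ s)
    (hμi : IntegrableOn (fun s => μ s / s) (Ioc 0 σ)) (ht : 0 ≤ t) (htt₀ : t ≤ t₀)
    (ht₀σ : t₀ ≤ σ) :
    ∫ s in t..t₀, μ s / s ≤ phi μ σ := by
  rw [intervalIntegral.integral_of_le htt₀]
  refine setIntegral_mono_set hμi ?_ (Ioc_subset_Ioc ht ht₀σ).eventuallyLE
  filter_upwards [ae_restrict_mem measurableSet_Ioc] with s hs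
  exact div_nonneg (hμ s hs) hs.1.le

theorem norm_sub_le_of_norm_deriv_le_decay {E : Type*} [NormedAddCommGroup E] [NormedSpace ℝ E]
    {x x' : ℝ → E} {μ : ℝ → ℝ} {σ a t t₀ B₀ c₁ c₂ : ℝ}
    (hμ : ∀ s ∈ Ioc 0 σ, 0 ≤ μ s) (hμi : IntegrableOn (fun s => μ s / s) (Ioc 0 σ))
    (ha : 0 < a) (ht : 0 < t) (htt₀ : t ≤ t₀) (ht₀σ : t₀ ≤ σ)
    (hB₀ : 0 ≤ B₀) (hc₁ : 0 ≤ c₁) (hc₂ : 0 ≤ c₂)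
    (hx : ∀ s ∈ Icc t t₀, HasDerivAt x (x' s) s)
    (hx' : ∀ s ∈ Ioo t t₀, ‖x' s‖ ≤ B₀ * (μ s / s) + c₁ * (t ^ a * s ^ (-a - 1)) +
      c₂ * (t ^ a * s ^ (-a - 1) * Real.log (s / t))) :
    ‖x t₀ - x t‖ ≤ B₀ * phi μ σ + c₁ / a + c₂ / a ^ 2 := by
  have hi₁ : IntervalIntegrable (fun s => μ s / s) volume t t₀ :=
    (intervalIntegrable_iff_integrableOn_Ioc_of_le htt₀).2
      (hμi.mono_set (Ioc_subset_Ioc ht.le ht₀σ))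
  have hi₂ : IntervalIntegrable (fun s => t ^ a * s ^ (-a - 1)) volume t t₀ := by
    refine ContinuousOn.intervalIntegrable_of_Icc htt₀ ?_
    fun_prop (disch := intro s hs; have := ht.trans_le hs.1; positivity)
  have hi₃ : IntervalIntegrable (fun s => t ^ a * s ^ (-a - 1) * Real.log (s / t)) volume t t₀ := by
    refine ContinuousOn.intervalIntegrable_of_Icc htt₀ ?_
    fun_prop (disch := intro s hs; have := ht.trans_le hs.1; positivity)
  calc ‖x t₀ - x t‖
      ≤ ∫ s in t..t₀, (B₀ * (μ s / s) + c₁ * (t ^ a * s ^ (-a - 1)) +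
          c₂ * (t ^ a * s ^ (-a - 1) * Real.log (s / t))) :=
        norm_sub_le_integral_of_norm_deriv_le_of_le htt₀
          (fun s hs => (hx s hs).continuousAt.continuousWithinAt)
          (fun s hs => (hx s (Ioo_subset_Icc_self hs)).differentiableAt.differentiableWithinAt)
          (ae_of_all _ fun s hs => (hx s (Ioo_subset_Icc_self hs)).deriv ▸ hx' s hs)
          (((hi₁.const_mul B₀).add (hi₂.const_mul c₁)).add (hi₃.const_mul c₂))
    _ = B₀ * (∫ s in t..t₀, μ s / s) + c₁ * (∫ s in t..t₀, t ^ a * s ^ (-a - 1)) +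
          c₂ * ∫ s in t..t₀, t ^ a * s ^ (-a - 1) * Real.log (s / t) := by
        rw [intervalIntegral.integral_add ((hi₁.const_mul B₀).add (hi₂.const_mul c₁))
          (hi₃.const_mul c₂), intervalIntegral.integral_add (hi₁.const_mul B₀) (hi₂.const_mul c₁)]
        simp only [intervalIntegral.integral_const_mul B₀, intervalIntegral.integral_const_mul c₁,
          intervalIntegral.integral_const_mul c₂]
    _ ≤ B₀ * phi μ σ + c₁ * (1 / a) + c₂ * (1 / a ^ 2) := by
        gcongr
        · exact intervalIntegral_le_phi hμ hμi ht.le htt₀ ht₀σ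
        · exact integral_rpow_decay_le ha ht htt₀
        · exact integral_rpow_decay_mul_log_le ha ht htt₀
    _ = B₀ * phi μ σ + c₁ / a + c₂ / a ^ 2 := by ring

theorem norm_characteristic_speed_le {b w q : ℝ → ℂ → ℂ} {x : ℝ → ℂ} {μ : ℝ → ℝ}
    {a Γ B₀ B₁ B₂ r₁ r₂ t s : ℝ} (hB₁ : 0 ≤ B₁) (hB₂ : 0 ≤ B₂) (hΓ : 0 ≤ Γ) (ht : 0 < t)
    (hts : t < s) (hb : ‖b s (x s)‖ ≤ B₀ * μ s + B₁ * ‖w s (x s)‖ + B₂ * ‖q s (x s)‖)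
    (hw : ‖w t (x t)‖ ≤ r₁) (hq : ‖q t (x t)‖ ≤ r₂)
    (hdecay : ‖w s (x s)‖ ≤ (t / s) ^ a * ‖w t (x t)‖ ∧
      ‖q s (x s)‖ ≤ (t / s) ^ a * (Γ * ‖w t (x t)‖ * Real.log (s / t) + ‖q t (x t)‖)) :
    ‖-b s (x s) / (s : ℂ)‖ ≤ B₀ * (μ s / s) + (B₁ * r₁ + B₂ * r₂) * (t ^ a * s ^ (-a - 1)) +
      B₂ * Γ * r₁ * (t ^ a * s ^ (-a - 1) * Real.log (s / t)) := by
  have hs : 0 < s := ht.trans hts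
  have hθ : 0 ≤ (t / s) ^ a := Real.rpow_nonneg (div_nonneg ht.le hs.le) a
  have hlog : 0 ≤ Real.log (s / t) := Real.log_nonneg ((one_le_div ht).mpr hts.le)
  have hkernel : (t / s) ^ a / s = t ^ a * s ^ (-a - 1) := by
    rw [Real.div_rpow ht.le hs.le, Real.rpow_sub_one hs.ne', Real.rpow_neg hs.le]
    field_simp
  have hβ : ‖b s (x s)‖ ≤
      B₀ * μ s + (t / s) ^ a * (B₁ * r₁ + B₂ * r₂ + B₂ * Γ * r₁ * Real.log (s / t)) :=
    calc ‖b s (x s)‖ ≤ B₀ * μ s + B₁ * ‖w s (x s)‖ + B₂ * ‖q s (x s)‖ := hb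
      _ ≤ B₀ * μ s + B₁ * ((t / s) ^ a * r₁) +
          B₂ * ((t / s) ^ a * (Γ * r₁ * Real.log (s / t) + r₂)) := by
        gcongr
        · exact hdecay.1.trans (by gcongr)
        · exact hdecay.2.trans (by gcongr)
      _ = _ := by ring
  rw [norm_neg_div_ofReal hs]
  calc ‖b s (x s)‖ / s
      ≤ (B₀ * μ s + (t / s) ^ a * (B₁ * r₁ + B₂ * r₂ + B₂ * Γ * r₁ * Real.log (s / t))) / s := by
        gcongr
    _ = _ := by rw [← hkernel]; ring

theorem characteristic_norm_sub_le {μ : ℝ → ℝ} {b w q : ℝ → ℂ → ℂ} {x : ℝ → ℂ}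
    {σ R a Γ B₀ B₁ B₂ r₁ r₂ t₁ t₀ : ℝ} (hμ : ∀ s ∈ Ioc 0 σ, 0 ≤ μ s)
    (hμi : IntegrableOn (fun s => μ s / s) (Ioc 0 σ)) (ha : 0 < a)
    (hB₀ : 0 ≤ B₀) (hB₁ : 0 ≤ B₁) (hB₂ : 0 ≤ B₂) (hΓ : 0 ≤ Γ)
    (hr₁ : ∀ t ∈ Ioo 0 σ, ∀ z ∈ Disc R, ‖w t z‖ ≤ r₁)
    (hr₂ : ∀ t ∈ Ioo 0 σ, ∀ z ∈ Disc R, ‖q t z‖ ≤ r₂)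
    (hbbd : ∀ t ∈ Ioo 0 σ, ∀ z ∈ Disc R, ‖b t z‖ ≤ B₀ * μ t + B₁ * ‖w t z‖ + B₂ * ‖q t z‖)
    (ht₁ : 0 ≤ t₁) (ht₀ : t₀ < σ)
    (hx : ∀ t ∈ Ioc t₁ t₀, x t ∈ Disc R ∧ HasDerivAt x (-b t (x t) / t) t)
    (hdecay : ∀ t τ : ℝ, t₁ < t → t < τ → τ ≤ t₀ →
      ‖w τ (x τ)‖ ≤ (t / τ) ^ a * ‖w t (x t)‖ ∧
      ‖q τ (x τ)‖ ≤ (t / τ) ^ a * (Γ * ‖w t (x t)‖ * Real.log (τ / t) + ‖q t (x t)‖)) :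
    ∀ t ∈ Ioc t₁ t₀,
      ‖x t - x t₀‖ ≤ B₀ * phi μ σ + (B₁ / a + B₂ * Γ / a ^ 2) * r₁ + (B₂ / a) * r₂ := by
  intro t ht
  have ht0 : 0 < t := ht₁.trans_lt ht.1
  have hσ : ∀ s ∈ Icc t t₀, s ∈ Ioo 0 σ := fun s hs => ⟨ht0.trans_le hs.1, hs.2.trans_lt ht₀⟩
  have hmem : ∀ s ∈ Icc t t₀, s ∈ Ioc t₁ t₀ := fun s hs => ⟨ht.1.trans_le hs.1, hs.2⟩
  have hw := hr₁ t (hσ t ⟨le_rfl, ht.2⟩) (x t) (hx t ht).1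
  have hq := hr₂ t (hσ t ⟨le_rfl, ht.2⟩) (x t) (hx t ht).1
  have hc₁ : 0 ≤ B₁ * r₁ + B₂ * r₂ := add_nonneg
    (mul_nonneg hB₁ ((norm_nonneg _).trans hw)) (mul_nonneg hB₂ ((norm_nonneg _).trans hq))
  have hc₂ : 0 ≤ B₂ * Γ * r₁ := mul_nonneg (mul_nonneg hB₂ hΓ) ((norm_nonneg _).trans hw)
  rw [norm_sub_rev]
  calc ‖x t₀ - x t‖ ≤ B₀ * phi μ σ + (B₁ * r₁ + B₂ * r₂) / a + B₂ * Γ * r₁ / a ^ 2 :=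
        norm_sub_le_of_norm_deriv_le_decay hμ hμi ha ht0 ht.2 ht₀.le hB₀ hc₁ hc₂
          (fun s hs => (hx s (hmem s hs)).2)
          (fun s hs => norm_characteristic_speed_le hB₁ hB₂ hΓ ht0 hs.1
            (hbbd s (hσ s (Ioo_subset_Icc_self hs)) _ (hx s (hmem s (Ioo_subset_Icc_self hs))).1)
            hw hq (hdecay t s ht.1 hs.1 hs.2.le))
    _ = _ := by ring

section

variable {E : Type*} [NormedAddCommGroup E] [NormedSpace ℝ E] [CompleteSpace E]

/- `IsPicardLindelof.exists_eq_forall_mem_Icc_hasDerivWithinAt` does not record that the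
solution stays in the ball, so we go back to the fixed point of `ODE.FunSpace.next`. -/
theorem exists_forall_mem_Ioo_hasDerivAt_of_closedBall_subset {v : ℝ → E → E} {U : Set E}
    {x₀ : E} {s ε r C : ℝ} {K : ℝ≥0} (hε : 0 ≤ ε) (hr : 0 ≤ r) (hCε : C * ε ≤ r)
    (hU : closedBall x₀ r ⊆ U)
    (hlip : ∀ t ∈ Icc (s - ε) (s + ε), LipschitzOnWith K (v t) U)
    (hcont : ∀ z ∈ U, ContinuousOn (fun t => v t z) (Icc (s - ε) (s + ε)))
    (hbound : ∀ t ∈ Icc (s - ε) (s + ε), ∀ z ∈ U, ‖v t z‖ ≤ C) :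
    ∃ f : ℝ → E, f s = x₀ ∧
      ∀ t ∈ Ioo (s - ε) (s + ε), f t ∈ U ∧ HasDerivAt f (v t (f t)) t := by
  have hs : s ∈ Icc (s - ε) (s + ε) := ⟨by linarith, by linarith⟩
  have hC : 0 ≤ C := (norm_nonneg _).trans (hbound s hs x₀ (hU (mem_closedBall_self hr)))
  lift C to ℝ≥0 using hC
  lift r to ℝ≥0 using hr
  have hpl : IsPicardLindelof v (⟨s, hs⟩ : Icc (s - ε) (s + ε)) x₀ r 0 C K :=
    { lipschitzOnWith := fun t ht => (hlip t ht).mono hU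
      continuousOn := fun z hz => hcont z (hU hz)
      norm_le := fun t ht z hz => hbound t ht z (hU hz)
      mul_max_le := by simpa using hCε }
  obtain ⟨α, hα⟩ := ODE.FunSpace.exists_isFixedPt_next hpl (mem_closedBall_self le_rfl)
  refine ⟨α.compProj, ?_, fun t ht => ⟨hU (α.compProj_mem_closedBall hpl.mul_max_le), ?_⟩⟩
  · rw [ODE.FunSpace.compProj_of_mem hs, ← hα, ODE.FunSpace.next_apply₀]
  · refine (ODE.hasDerivWithinAt_picard_Icc hs hpl.continuousOn_uncurry
      α.continuous_compProj.continuousOn (fun _ _ => α.compProj_mem_closedBall hpl.mul_max_le)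
      x₀ (Ioo_subset_Icc_self ht) |>.congr_of_mem (fun t' ht' => ?_) (Ioo_subset_Icc_self ht)
      ).hasDerivAt (Icc_mem_nhds ht.1 ht.2)
    nth_rw 1 [← hα]
    rw [ODE.FunSpace.compProj_of_mem ht', ODE.FunSpace.next_apply]

theorem exists_hasDerivAt_extension_below {v : ℝ → E → E} {U : Set E} {x : ℝ → E}
    {τ t₁ t₂ r C : ℝ} {K : ℝ≥0} (hτ : τ < t₁) (ht₁₂ : t₁ < t₂) (hr : 0 < r)
    (hlip : ∀ t ∈ Icc τ t₂, LipschitzOnWith K (v t) U)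
    (hcont : ∀ z ∈ U, ContinuousOn (fun t => v t z) (Icc τ t₂))
    (hbound : ∀ t ∈ Icc τ t₂, ∀ z ∈ U, ‖v t z‖ ≤ C)
    (hx : ∀ t ∈ Ioc t₁ t₂, HasDerivAt x (v t (x t)) t)
    (hxU : ∀ t ∈ Ioc t₁ t₂, closedBall (x t) r ⊆ U) :
    ∃ t' < t₁, ∃ y : ℝ → E, (∀ t ∈ Ioc t' t₂, y t ∈ U ∧ HasDerivAt y (v t (y t)) t) ∧
      ∀ t ∈ Ioc t₁ t₂, y t = x t := by
  have hxU' : ∀ t ∈ Ioc t₁ t₂, x t ∈ U := fun t ht => hxU t ht (mem_closedBall_self hr.le)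
  have hC : 0 ≤ C := (norm_nonneg _).trans
    (hbound t₂ ⟨by linarith, le_rfl⟩ _ (hxU' t₂ ⟨ht₁₂, le_rfl⟩))
  -- Picard–Lindelöf from `(s, x s)` lives on `(s - ε, s + ε)` with `ε` independent of `s`,
  -- so starting just above `t₁` reaches below it; uniqueness makes the new solution continue `x`.
  set ε := min (min (t₁ - τ) ((t₂ - t₁) / 2)) (r / (C + 1))
  have hε : 0 < ε := lt_min (lt_min (by linarith) (by linarith)) (by positivity)
  have hε₁ : ε ≤ t₁ - τ := (min_le_left _ _).trans (min_le_left _ _)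
  have hε₂ : ε ≤ (t₂ - t₁) / 2 := (min_le_left _ _).trans (min_le_right _ _)
  have hCε : C * ε ≤ r := calc
    C * ε ≤ (C + 1) * (r / (C + 1)) := by gcongr; linarith; exact min_le_right _ _
    _ = r := by field_simp
  set s := t₁ + ε / 2 with hs_def
  have hs : s ∈ Ioc t₁ t₂ := ⟨by linarith, by linarith⟩
  have hsub : Icc (s - ε) (s + ε) ⊆ Icc τ t₂ := Icc_subset_Icc (by linarith) (by linarith)
  obtain ⟨f, hfs, hf⟩ := exists_forall_mem_Ioo_hasDerivAt_of_closedBall_subset hε.le hr.le hCε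
    (hxU s hs) (fun t ht => hlip t (hsub ht)) (fun z hz => (hcont z hz).mono hsub)
    (fun t ht => hbound t (hsub ht))
  have hfx : EqOn f x (Ioo t₁ (s + ε)) := by
    have hIoo : Ioo t₁ (s + ε) ⊆ Ioc t₁ t₂ := fun t ht => ⟨ht.1, by linarith [ht.2]⟩
    refine ODE_solution_unique_of_mem_Ioo (s := fun _ => U) (fun t ht => hlip t ?_)
      ⟨hs.1, by linarith⟩ (fun t ht => (hf t ⟨by linarith [ht.1], ht.2⟩).symm)
      (fun t ht => ⟨hx t (hIoo ht), hxU' t (hIoo ht)⟩) hfs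
    exact ⟨by linarith [ht.1], by linarith [ht.2]⟩
  set y : ℝ → E := fun t => if t ≤ t₁ then f t else x t
  refine ⟨s - ε, by linarith, y, fun t ht => ?_, fun t ht => if_neg (not_le.2 ht.1)⟩
  rcases le_or_gt t t₁ with hle | hlt
  · have ht' : t ∈ Ioo (s - ε) (s + ε) := ⟨ht.1, by linarith⟩
    have hyf : y =ᶠ[𝓝 t] f := by
      filter_upwards [Ioo_mem_nhds ht'.1 ht'.2] with u hu
      by_cases h : u ≤ t₁
      · exact if_pos h
      · exact (if_neg h).trans (hfx ⟨not_le.1 h, hu.2⟩).symm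
    rw [hyf.eq_of_nhds]
    exact ⟨(hf t ht').1, (hf t ht').2.congr_of_eventuallyEq hyf⟩
  · have hyx : y =ᶠ[𝓝 t] x := by
      filter_upwards [Ioi_mem_nhds hlt] with u hu
      exact if_neg (not_le.2 hu)
    rw [hyx.eq_of_nhds]
    exact ⟨hxU' t ⟨hlt, ht.2⟩, (hx t ⟨hlt, ht.2⟩).congr_of_eventuallyEq hyx⟩

end

theorem lipschitzOnWith_closedBall_of_norm_le {F : Type*} [NormedAddCommGroup F]
    [NormedSpace ℂ F] {f : ℂ → F} {c : ℂ} {ρ δ R M : ℝ} (hδ : 0 < δ) (hρR : ρ + δ < R)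
    (hf : DifferentiableOn ℂ f (ball c R)) (hM : ∀ z ∈ ball c R, ‖f z‖ ≤ M) :
    LipschitzOnWith (M / δ).toNNReal f (closedBall c ρ) := by
  have hball : ∀ z ∈ closedBall c ρ, closedBall z δ ⊆ ball c R := fun z hz =>
    closedBall_subset_ball' (by linarith [mem_closedBall.1 hz])
  refine (convex_closedBall c ρ).lipschitzOnWith_of_nnnorm_deriv_le (fun z hz =>
      hf.differentiableAt (isOpen_ball.mem_nhds (hball z hz (mem_closedBall_self hδ.le))))
    (fun z hz => NNReal.le_toNNReal_of_coe_le ?_)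
  exact norm_deriv_le_of_forall_mem_sphere_norm_le hδ (hf.diffContOnCl_ball (hball z hz))
    (fun u hu => hM u (hball z hz (sphere_subset_closedBall hu)))

theorem exists_characteristic_extension_below {b : ℝ → ℂ → ℂ} {x : ℝ → ℂ}
    {σ R ρ M t₁ t₂ : ℝ}
    (hb : ContinuousOn (fun p : ℝ × ℂ => b p.1 p.2) (Ioo 0 σ ×ˢ Disc R))
    (hb' : ∀ t ∈ Ioo 0 σ, DifferentiableOn ℂ (b t) (Disc R))
    (ht₁ : 0 < t₁) (ht₁₂ : t₁ < t₂) (ht₂ : t₂ < σ) (hρR : ρ < R)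
    (hM : ∀ t ∈ Ioc 0 t₂, ∀ z ∈ Disc R, ‖b t z‖ ≤ M)
    (hx : ∀ t ∈ Ioc t₁ t₂, ‖x t‖ ≤ ρ ∧ HasDerivAt x (-b t (x t) / t) t) :
    ∃ t' < t₁, ∃ y : ℝ → ℂ, (∀ t ∈ Ioc t' t₂, y t ∈ Disc R ∧ HasDerivAt y (-b t (y t) / t) t) ∧
      ∀ t ∈ Ioc t₁ t₂, y t = x t := by
  rw [disc_eq_ball] at hb hb' hM ⊢
  set r := (R - ρ) / 4 with hr_def
  have hr : 0 < r := by positivity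
  have hτ : 0 < t₁ / 2 := by positivity
  have hsub : Icc (t₁ / 2) t₂ ⊆ Ioo 0 σ := fun t ht => ⟨hτ.trans_le ht.1, ht.2.trans_lt ht₂⟩
  have hv : ∀ t ∈ Icc (t₁ / 2) t₂, ∀ z ∈ ball (0 : ℂ) R, ‖-b t z / (t : ℂ)‖ ≤ M / (t₁ / 2) := by
    intro t ht z hz
    have hbz := hM t ⟨hτ.trans_le ht.1, ht.2⟩ z hz
    rw [norm_neg_div_ofReal (hτ.trans_le ht.1)]
    exact div_le_div₀ ((norm_nonneg _).trans hbz) hbz hτ ht.1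
  have hvc : ∀ z ∈ ball (0 : ℂ) R, ContinuousOn (fun t : ℝ => -b t z / (t : ℂ)) (Icc (t₁ / 2) t₂) :=
    fun z hz => (hb.comp (continuousOn_id.prodMk continuousOn_const) fun _ ht => ⟨hsub ht, hz⟩
      ).neg.div Complex.continuous_ofReal.continuousOn
        fun _ ht => ofReal_ne_zero.2 (hτ.trans_le ht.1).ne'
  have hUR : closedBall (0 : ℂ) (ρ + r) ⊆ ball 0 R := closedBall_subset_ball (by linarith)
  obtain ⟨t', ht', y, hy, hyx⟩ := exists_hasDerivAt_extension_below (U := closedBall 0 (ρ + r))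
    (by linarith : t₁ / 2 < t₁) ht₁₂ hr
    (fun t ht => lipschitzOnWith_closedBall_of_norm_le hr (by linarith)
      ((hb' t (hsub ht)).neg.div_const _) (hv t ht))
    (fun z hz => hvc z (hUR hz)) (fun t ht z hz => hv t ht z (hUR hz)) (fun t ht => (hx t ht).2)
    (fun t ht => closedBall_subset_closedBall' (by rw [dist_zero_right]; linarith [(hx t ht).1]))
  exact ⟨t', ht', y, fun t ht => ⟨hUR (hy t ht).1, (hy t ht).2⟩, hyx⟩

theorem characteristic_exists_down_to_zero_general
    (σ R : ℝ)
    (μ : ℝ → ℝ) (hμ : IsWeight σ μ)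
    (B₀ B₁ B₂ : ℝ) (hB₀ : 0 < B₀) (hB₁ : 0 < B₁) (hB₂ : 0 < B₂)
    (a : ℝ) (ha : 0 < a) (Γ : ℝ) (hΓ : 0 ≤ Γ)
    (b : ℝ → ℂ → ℂ)
    -- `b ∈ 𝒳₀((0,σ) × D_R)`
    (hbX : ContinuousOn (fun p : ℝ × ℂ => b p.1 p.2) (Set.Ioo 0 σ ×ˢ Disc R) ∧
      ∀ t ∈ Set.Ioo (0:ℝ) σ, DifferentiableOn ℂ (b t) (Disc R))
    (w q : ℝ → ℂ → ℂ) (r₁ r₂ : ℝ)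
    (hr₁ : ∀ t ∈ Set.Ioo (0:ℝ) σ, ∀ z ∈ Disc R, ‖w t z‖ ≤ r₁)
    (hr₂ : ∀ t ∈ Set.Ioo (0:ℝ) σ, ∀ z ∈ Disc R, ‖q t z‖ ≤ r₂)
    (hbbd : ∀ t ∈ Set.Ioo (0:ℝ) σ, ∀ z ∈ Disc R,
      ‖b t z‖ ≤ B₀ * μ t + B₁ * ‖w t z‖ + B₂ * ‖q t z‖)
    -- the smallness condition of Lemma 2.6
    (hsmall : B₀ * phi μ σ + (B₁ / a + B₂ * Γ / a ^ 2) * r₁ + (B₂ / a) * r₂ < R / 2)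
    -- the characteristic curve on its maximal interval of existence `(t_ξ, t₀]`
    (t₀ : ℝ) (ht₀ : t₀ ∈ Set.Ioo 0 σ) (ξ : ℂ) (hξ : ξ ∈ Disc (R / 2))
    (tξ : ℝ) (htξ : 0 ≤ tξ) (htξt₀ : tξ < t₀)
    (x : ℝ → ℂ)
    (hxsol : ∀ t ∈ Set.Ioc tξ t₀, x t ∈ Disc R ∧
      HasDerivAt x (-(b t (x t)) / (t : ℂ)) t)
    (hxinit : x t₀ = ξ)
    -- the decay estimates of Lemma 2.7 along the curve
    (hdecay : ∀ t₁ τ : ℝ, tξ < t₁ → t₁ < τ → τ ≤ t₀ →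
      ‖w τ (x τ)‖ ≤ (t₁ / τ) ^ a * ‖w t₁ (x t₁)‖ ∧
      ‖q τ (x τ)‖ ≤ (t₁ / τ) ^ a *
        (Γ * ‖w t₁ (x t₁)‖ * Real.log (τ / t₁) + ‖q t₁ (x t₁)‖))
    -- maximality : the solution cannot be extended below `t_ξ`
    (hmax : ∀ t' : ℝ, t' < tξ →
      ¬ ∃ y : ℝ → ℂ, (∀ t ∈ Set.Ioc t' t₀, y t ∈ Disc R ∧
          HasDerivAt y (-(b t (y t)) / (t : ℂ)) t) ∧
        ∀ t ∈ Set.Ioc tξ t₀, y t = x t) :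
    tξ = 0 := by
  obtain ⟨hμpos, -, hμmono, hμint⟩ := hμ
  by_contra h0
  have htξ_pos : 0 < tξ := htξ.lt_of_ne (Ne.symm h0)
  have hnear := characteristic_norm_sub_le (fun t ht => (hμpos t ht).le) hμint ha hB₀.le
    hB₁.le hB₂.le hΓ hr₁ hr₂ hbbd htξ ht₀.2 hxsol hdecay
  have hM : ∀ t ∈ Ioc 0 t₀, ∀ z ∈ Disc R, ‖b t z‖ ≤ B₀ * μ t₀ + B₁ * r₁ + B₂ * r₂ := by
    intro t ht z hz
    have htσ : t ∈ Ioo 0 σ := ⟨ht.1, ht.2.trans_lt ht₀.2⟩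
    calc ‖b t z‖ ≤ B₀ * μ t + B₁ * ‖w t z‖ + B₂ * ‖q t z‖ := hbbd t htσ z hz
      _ ≤ B₀ * μ t₀ + B₁ * r₁ + B₂ * r₂ := by
        gcongr
        · exact hμmono ⟨ht.1, htσ.2.le⟩ ⟨ht₀.1, ht₀.2.le⟩ ht.2
        · exact hr₁ t htσ z hz
        · exact hr₂ t htσ z hz
  have hξR : ‖ξ‖ < R / 2 := hξ
  have hbounded : ∀ t ∈ Ioc tξ t₀, ‖x t‖ ≤ ‖ξ‖ + (B₀ * phi μ σ +
      (B₁ / a + B₂ * Γ / a ^ 2) * r₁ + (B₂ / a) * r₂) ∧ HasDerivAt x (-b t (x t) / t) t :=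
    fun t ht => ⟨by linarith [norm_le_norm_add_norm_sub' (x t) ξ, hxinit ▸ hnear t ht],
      (hxsol t ht).2⟩
  obtain ⟨t', ht', y, hy, hyx⟩ := exists_characteristic_extension_below hbX.1 hbX.2 htξ_pos
    htξt₀ ht₀.2 (by linarith) hM hbounded
  exact hmax t' ht' ⟨y, hy, hyx⟩

/-- Corollary 2.9 : if `ξ ∈ D_{R/2}` then the maximal characteristic curve through
`(t₀, ξ)` extends backwards to `t = 0`, i.e. `t_ξ = 0`.  Here `σ, R` are chosen so that
`B₀φ(σ) + (B₁/a + B₂Γ/a²) r₁ + (B₂/a) r₂ < R/2`, where `r₁, r₂` bound `|w|, |q|`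
on `(0,σ) × D_R`, and along the curve the decay estimates of Lemma 2.7 hold. -/
theorem characteristic_exists_down_to_zero
    (σ R : ℝ) (hσ : 0 < σ) (hR : 0 < R)
    (μ : ℝ → ℝ) (hμ : IsWeight σ μ)
    (B₀ B₁ B₂ : ℝ) (hB₀ : 0 < B₀) (hB₁ : 0 < B₁) (hB₂ : 0 < B₂)
    (a : ℝ) (ha : 0 < a) (Γ : ℝ) (hΓ : 0 ≤ Γ)
    (b : ℝ → ℂ → ℂ)
    -- `b ∈ 𝒳₀((0,σ) × D_R)`
    (hbX : ContinuousOn (fun p : ℝ × ℂ => b p.1 p.2) (Set.Ioo 0 σ ×ˢ Disc R) ∧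
      ∀ t ∈ Set.Ioo (0:ℝ) σ, DifferentiableOn ℂ (b t) (Disc R))
    (w q : ℝ → ℂ → ℂ) (r₁ r₂ : ℝ)
    (hr₁ : ∀ t ∈ Set.Ioo (0:ℝ) σ, ∀ z ∈ Disc R, ‖w t z‖ ≤ r₁)
    (hr₂ : ∀ t ∈ Set.Ioo (0:ℝ) σ, ∀ z ∈ Disc R, ‖q t z‖ ≤ r₂)
    (hbbd : ∀ t ∈ Set.Ioo (0:ℝ) σ, ∀ z ∈ Disc R,
      ‖b t z‖ ≤ B₀ * μ t + B₁ * ‖w t z‖ + B₂ * ‖q t z‖)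
    -- the smallness condition of Lemma 2.6
    (hsmall : B₀ * phi μ σ + (B₁ / a + B₂ * Γ / a ^ 2) * r₁ + (B₂ / a) * r₂ < R / 2)
    -- the characteristic curve on its maximal interval of existence `(t_ξ, t₀]`
    (t₀ : ℝ) (ht₀ : t₀ ∈ Set.Ioo 0 σ) (ξ : ℂ) (hξ : ξ ∈ Disc (R / 2))
    (tξ : ℝ) (htξ : 0 ≤ tξ) (htξt₀ : tξ < t₀)
    (x : ℝ → ℂ)
    (hxsol : ∀ t ∈ Set.Ioc tξ t₀, x t ∈ Disc R ∧
      HasDerivAt x (-(b t (x t)) / (t : ℂ)) t)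
    (hxinit : x t₀ = ξ)
    -- the decay estimates of Lemma 2.7 along the curve
    (hdecay : ∀ t₁ τ : ℝ, tξ < t₁ → t₁ < τ → τ ≤ t₀ →
      ‖w τ (x τ)‖ ≤ (t₁ / τ) ^ a * ‖w t₁ (x t₁)‖ ∧
      ‖q τ (x τ)‖ ≤ (t₁ / τ) ^ a *
        (Γ * ‖w t₁ (x t₁)‖ * Real.log (τ / t₁) + ‖q t₁ (x t₁)‖))
    -- maximality : the solution cannot be extended below `t_ξ`
    (hmax : ∀ t' : ℝ, t' < tξ →
      ¬ ∃ y : ℝ → ℂ, (∀ t ∈ Set.Ioc t' t₀, y t ∈ Disc R ∧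
          HasDerivAt y (-(b t (y t)) / (t : ℂ)) t) ∧
        ∀ t ∈ Set.Ioc tξ t₀, y t = x t) :
    tξ = 0 :=
  characteristic_exists_down_to_zero_general σ R μ hμ B₀ B₁ B₂ hB₀ hB₁ hB₂ a ha Γ hΓ b hbX w q r₁ r₂
    hr₁ hr₂ hbbd hsmall t₀ ht₀ ξ hξ tξ htξ htξt₀ x hxsol hxinit hdecay hmax
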